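/- arXiv:1909.02045 — 5 statements merged into one kernel-verified Lean document; each statement's English description precedes it below -/
import Mathlib

section
/- Let r ≥ 1 and t ≥ 1 be integers, and let a = r mod t. If M is a finite simple matroid of rank r with no (t+1)-claw, then the ground set of M has at least (t − a)·2^⌊r/t⌋ + a·2^⌈r/t⌉ − t elements. -/
/-- A matroid is *simple* if every one- or two-element subset of the ground set
is independent (equivalently: it is loopless and has no two distinct parallel elements). -/
def Matroid.IsSimple {α : Type*} (M : Matroid α) : Prop :=
  ∀ e ∈ M.E, ∀ f ∈ M.E, M.Indep {e, f}

/-- A *claw* of a matroid is a set that is both a flat and independent. -/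
def Matroid.IsClaw {α : Type*} (M : Matroid α) (S : Set α) : Prop :=
  M.IsFlat S ∧ M.Indep S

/-!
Let `C` be a largest claw, of size `k ≤ t`. As `C` is a flat, `M ／ C` is loopless, and each of
its parallel classes has at least two elements, since otherwise adding that element to `C` would
give a `(k+1)`-claw. Keeping one element of each parallel class yields a simple matroid `N` of
rank `r - k` with `k + 2 |E(N)| ≤ |E(M)|`, and every claw of `N` is a claw of `M`, so `N` has no
`(k+1)`-claw. Induction on the rank then gives `|E(M)| ≥ g_k(r) ≥ g_t(r)`, where
`g_t(r) = ∑_{i<r} 2^⌊i/t⌋` (`clawBound t r`) satisfies `g_t(r) = t + 2 g_t(r - t)` and equals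
`f(r,t)`.
-/

open Finset in
def clawBound (t r : ℕ) : ℕ := ∑ i ∈ range r, 2 ^ (i / t)

lemma clawBound_of_le {t r : ℕ} (h : r ≤ t) : clawBound t r = r := by
  rw [clawBound, Finset.sum_congr rfl fun i hi => by
    rw [Nat.div_eq_of_lt (by simp at hi; omega), pow_zero]]
  simp

lemma clawBound_self_add {t : ℕ} (ht : 1 ≤ t) (n : ℕ) :
    clawBound t (t + n) = t + 2 * clawBound t n := by
  rw [clawBound, Finset.sum_range_add, ← clawBound, clawBound_of_le le_rfl, clawBound,
    Finset.mul_sum]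
  congr 1
  refine Finset.sum_congr rfl fun j _ => ?_
  rw [Nat.add_div_left _ (by omega), pow_succ, mul_comm]

lemma clawBound_anti_left {k t : ℕ} (hk : 1 ≤ k) (hkt : k ≤ t) (r : ℕ) :
    clawBound t r ≤ clawBound k r :=
  Finset.sum_le_sum fun _ _ => Nat.pow_le_pow_right two_pos (Nat.div_le_div_left hkt hk)

lemma clawBound_mul_add {t a : ℕ} (ht : 1 ≤ t) (ha : a ≤ t) (q : ℕ) :
    clawBound t (t * q + a) + t = (t + a) * 2 ^ q := by
  induction q with
  | zero => simp [clawBound_of_le ha, add_comm]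
  | succ q ih =>
    rw [show t * (q + 1) + a = t + (t * q + a) by ring, clawBound_self_add ht, pow_succ]
    linarith

lemma clawBound_eq {t : ℕ} (ht : 1 ≤ t) (r : ℕ) :
    clawBound t r = (t - r % t) * 2 ^ (r / t) + (r % t) * 2 ^ ((r + t - 1) / t) - t := by
  have hr := Nat.div_add_mod r t
  have ha : r % t < t := Nat.mod_lt r ht
  have h := clawBound_mul_add ht ha.le (r / t)
  rw [hr] at h
  rcases Nat.eq_zero_or_pos (r % t) with h0 | hpos
  · rw [h0] at h ⊢
    simp only [zero_mul, add_zero, Nat.sub_zero] at h ⊢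
    omega
  · have hceil : (r + t - 1) / t = r / t + 1 :=
      Nat.div_eq_of_lt_le (by rw [add_one_mul, mul_comm]; omega)
        (by rw [add_one_mul, add_one_mul, mul_comm]; omega)
    have hsplit : (t - r % t) * 2 ^ (r / t) + r % t * 2 ^ (r / t + 1) =
        (t + r % t) * 2 ^ (r / t) := by
      zify [ha.le]; ring
    rw [hceil, hsplit]
    omega

open Set

namespace Matroid

variable {α : Type*} {M : Matroid α} {B C R S T : Set α} {e : α}

lemma IsSimple.isNonloop (hM : M.IsSimple) (he : e ∈ M.E) : M.IsNonloop e :=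
  indep_singleton.1 (by simpa using hM e he e he)

lemma IsSimple.loopless (hM : M.IsSimple) : M.Loopless :=
  loopless_iff_forall_isNonloop.2 fun _ => hM.isNonloop

lemma IsSimple.closure_singleton (hM : M.IsSimple) (he : e ∈ M.E) : M.closure {e} = {e} := by
  refine subset_antisymm (fun f hf => ?_) (singleton_subset_iff.2 (M.mem_closure_self e he))
  have hfE : f ∈ M.E := M.closure_subset_ground _ hf
  have hfn := hM.isNonloop hfE
  exact ((hfn.closure_eq_closure_iff_eq_or_dep (hM.isNonloop he)).1
    (hfn.closure_eq_of_mem_closure hf)).resolve_right (not_not.2 (hM f hfE e he))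

lemma IsSimple.isClaw_singleton (hM : M.IsSimple) (he : e ∈ M.E) : M.IsClaw {e} :=
  ⟨isFlat_iff_closure_eq.2 (hM.closure_singleton he), indep_singleton.2 (hM.isNonloop he)⟩

lemma IsClaw.subset (hS : M.IsClaw S) (hTS : T ⊆ S) : M.IsClaw T := by
  refine ⟨isFlat_iff_closure_eq.2 ?_, hS.2.subset hTS⟩
  have hTS' : M.closure T ⊆ S := hS.1.closure ▸ M.closure_subset_closure hTS
  rw [← inter_eq_left.2 hTS']
  exact hS.2.closure_inter_eq_self_of_subset hTS

lemma IsClaw.ncard_le {n : ℕ} (hno : ¬ ∃ T, M.IsClaw T ∧ T.ncard = n + 1) (hS : M.IsClaw S) :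
    S.ncard ≤ n := by
  by_contra! h
  obtain ⟨T, hTS, hT⟩ := exists_subset_card_eq (show n + 1 ≤ S.ncard by omega)
  exact hno ⟨T, hS.subset hTS, hT⟩

lemma exists_isClaw_forall_ncard_le (hM : M.IsSimple) (hfin : M.E.Finite) :
    ∃ C, M.IsClaw C ∧ ∀ S, M.IsClaw S → S.ncard ≤ C.ncard := by
  have hclaws : {S | M.IsClaw S}.Finite :=
    hfin.finite_subsets.subset fun S hS => hS.2.subset_ground
  have hempty : M.IsClaw ∅ := by
    refine ⟨isFlat_iff_closure_eq.2 ?_, M.empty_indep⟩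
    have := hM.loopless
    rw [closure_empty, loops_eq_empty]
  exact exists_max_image _ ncard hclaws ⟨∅, hempty⟩

lemma IsClaw.contract_loopless (hC : M.IsClaw C) : (M ／ C).Loopless :=
  ⟨by rw [contract_loops_eq, hC.1.closure, sdiff_self]⟩

lemma IsClaw.exists_ne_mem_closure_contract (hC : M.IsClaw C) (hCfin : C.Finite)
    (hmax : ∀ S, M.IsClaw S → S.ncard ≤ C.ncard) (he : e ∈ (M ／ C).E) :
    ∃ f ∈ (M ／ C).closure {e}, f ≠ e := by
  by_contra! h
  have hind : M.Indep (insert e C) := by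
    rw [hC.2.insert_indep_iff_of_notMem he.2, hC.1.closure]
    exact he
  have hflat : M.IsFlat (insert e C) := by
    refine isFlat_iff_closure_eq.2
      (subset_antisymm (fun z hz => ?_) (M.subset_closure _ hind.subset_ground))
    by_cases hzC : z ∈ C
    · exact mem_insert_of_mem e hzC
    · rw [h z (by rw [contract_closure_eq, singleton_union]; exact ⟨hz, hzC⟩)]
      exact mem_insert e C
  have := hmax _ ⟨hflat, hind⟩
  rw [ncard_insert_of_notMem he.2 hCfin] at this
  omega

/-- For loopless `M`, the parallel classes are the sets `M.closure {x}`; `R` picks one element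
from each. -/
structure IsParallelTransversal (M : Matroid α) (R : Set α) : Prop where
  subset_ground : R ⊆ M.E
  eq_of_mem_closure : ∀ ⦃x⦄, x ∈ R → ∀ ⦃y⦄, y ∈ R → y ∈ M.closure {x} → y = x
  exists_mem_closure : ∀ e ∈ M.E, ∃ x ∈ R, e ∈ M.closure {x}

lemma exists_isParallelTransversal [M.Loopless] (hfin : M.E.Finite) :
    ∃ R, M.IsParallelTransversal R := by
  set F := {R | R ⊆ M.E ∧ ∀ x ∈ R, ∀ y ∈ R, y ∈ M.closure {x} → y = x}
  have hF : F.Finite := hfin.finite_subsets.subset fun R hR => hR.1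
  obtain ⟨R, ⟨hRE, hRpar⟩, hmax⟩ :=
    exists_max_image F ncard hF ⟨∅, empty_subset _, by simp⟩
  refine ⟨R, hRE, hRpar, fun e he => ?_⟩
  by_contra! hcov
  have heR : e ∉ R := fun heR => hcov e heR (M.mem_closure_self e he)
  have hins : insert e R ∈ F := by
    refine ⟨insert_subset he hRE, ?_⟩
    simp only [mem_insert_iff, forall_eq_or_imp, implies_true, true_and]
    refine ⟨fun y hy hye => ?_, fun x hx => ⟨fun hex => (hcov x hx hex).elim, hRpar x hx⟩⟩
    exact (hcov y hy ((isNonloop_of_loopless (hRE hy)).mem_closure_singleton hye)).elim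
  have := hmax _ hins
  rw [ncard_insert_of_notMem heR (hfin.subset hRE)] at this
  omega

namespace IsParallelTransversal

lemma isSimple_restrict [M.Loopless] (hR : M.IsParallelTransversal R) : (M ↾ R).IsSimple := by
  intro x hx y hy
  refine ⟨?_, pair_subset hx hy⟩
  have hxn := isNonloop_of_loopless (hR.subset_ground hx)
  have hyn := isNonloop_of_loopless (hR.subset_ground hy)
  by_contra hdep
  obtain rfl | hxy := eq_or_ne x y
  · exact hdep (by simpa using hxn)
  refine hxy (hR.eq_of_mem_closure hx hy ?_).symm
  rw [(hxn.closure_eq_closure_iff_eq_or_dep hyn).2 (Or.inr hdep)]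
  exact M.mem_closure_self y hyn.mem_ground

lemma spanning (hR : M.IsParallelTransversal R) : M.Spanning R := by
  refine (spanning_iff_ground_subset_closure hR.subset_ground).2 fun e he => ?_
  obtain ⟨x, hx, hex⟩ := hR.exists_mem_closure e he
  exact M.closure_subset_closure (singleton_subset_iff.2 hx) hex

lemma two_mul_ncard_le [M.Loopless] (hR : M.IsParallelTransversal R) (hfin : M.E.Finite)
    (h : ∀ e ∈ M.E, ∃ f ∈ M.closure {e}, f ≠ e) : 2 * R.ncard ≤ M.E.ncard := by
  choose! g hgcl hgne using h
  have hRfin : R.Finite := hfin.subset hR.subset_ground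
  have hdisj : Disjoint R (g '' R) := by
    rw [disjoint_right]
    rintro _ ⟨x, hx, rfl⟩ hgx
    exact hgne x (hR.subset_ground hx)
      (hR.eq_of_mem_closure hx hgx (hgcl x (hR.subset_ground hx)))
  have hinj : InjOn g R := by
    intro x hx y hy hxy
    have hgx := hgcl x (hR.subset_ground hx)
    have hgy := hgcl y (hR.subset_ground hy)
    rw [hxy] at hgx
    have hgn := isNonloop_of_loopless (M.closure_subset_ground _ hgy)
    refine (hR.eq_of_mem_closure hx hy ?_).symm
    rw [← hgn.closure_eq_of_mem_closure hgx, hgn.closure_eq_of_mem_closure hgy]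
    exact M.mem_closure_self y (hR.subset_ground hy)
  have hsub : R ∪ g '' R ⊆ M.E :=
    union_subset hR.subset_ground (image_subset_iff.2 fun x hx =>
      M.closure_subset_ground _ (hgcl x (hR.subset_ground hx)))
  calc 2 * R.ncard = (R ∪ g '' R).ncard := by
        rw [ncard_union_eq hdisj hRfin (hRfin.image g), hinj.ncard_image, two_mul]
    _ ≤ M.E.ncard := ncard_le_ncard hsub hfin

end IsParallelTransversal

lemma IsClaw.of_restrict_contract (hS : (M ／ C ↾ R).IsClaw S) (hM : M.IsSimple)
    (hC : M.IsClaw C) (hR : (M ／ C).IsParallelTransversal R) : M.IsClaw S := by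
  have hSR : S ⊆ R := hS.2.subset_ground
  obtain ⟨hSC, hSCind⟩ := hC.2.contract_indep_iff.1 hS.2.of_restrict
  have hSind : M.Indep S := hSCind.subset subset_union_left
  -- `S ∪ C` is independent, so the closures of its subsets intersect as the subsets do.
  have hmod : ∀ J ⊆ S ∪ C, M.closure S ∩ M.closure J = M.closure (S ∩ J) := fun J hJ =>
    (hSCind.subset (union_subset subset_union_left hJ)).closure_inter_eq_inter_closure.symm
  refine ⟨isFlat_iff_closure_eq.2 (subset_antisymm (fun z hz => ?_)
    (M.subset_closure S hSind.subset_ground)), hSind⟩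
  by_cases hzC : z ∈ C
  · have hz' : z ∈ M.closure (S ∩ C) :=
      hmod C subset_union_right ▸ ⟨hz, M.subset_closure C hC.2.subset_ground hzC⟩
    have := hM.loopless
    rw [hSC.inter_eq, closure_empty, loops_eq_empty] at hz'
    exact absurd hz' (notMem_empty z)
  have hzN : z ∈ (M ／ C).closure S := by
    rw [contract_closure_eq]
    exact ⟨M.closure_subset_closure subset_union_left hz, hzC⟩
  have hzE := (M ／ C).closure_subset_ground _ hzN
  obtain ⟨x, hxR, hzx⟩ := hR.exists_mem_closure z hzE
  have := hC.contract_loopless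
  have hxS : x ∈ S := by
    have hxN : x ∈ (M ／ C).closure S :=
      (M ／ C).closure_subset_closure_of_subset_closure (singleton_subset_iff.2 hzN)
        ((isNonloop_of_loopless hzE).mem_closure_singleton hzx)
    rw [← hS.1.closure, restrict_closure_eq _ hSR hR.subset_ground]
    exact ⟨hxN, hxR⟩
  rw [contract_closure_eq, singleton_union] at hzx
  have hz' : z ∈ M.closure (S ∩ insert x C) :=
    hmod _ (insert_subset (Or.inl hxS) subset_union_right) ▸ ⟨hz, hzx.1⟩
  rw [insert_eq, inter_union_distrib_left, hSC.inter_eq, union_empty,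
    inter_eq_right.2 (singleton_subset_iff.2 hxS),
    hM.closure_singleton (hSind.subset_ground hxS)] at hz'
  rwa [mem_singleton_iff.1 hz']

lemma IsClaw.exists_simple_minor (hM : M.IsSimple) (hfin : M.E.Finite) (hC : M.IsClaw C)
    (hmax : ∀ S, M.IsClaw S → S.ncard ≤ C.ncard) :
    ∃ N : Matroid α, N.IsSimple ∧ N.E.Finite ∧ C.ncard + 2 * N.E.ncard ≤ M.E.ncard ∧
      (∀ B, N.IsBase B → M.IsBase (B ∪ C) ∧ Disjoint B C) ∧
      ∀ S, N.IsClaw S → M.IsClaw S := by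
  have := hC.contract_loopless
  have hCfin : C.Finite := hfin.subset hC.2.subset_ground
  obtain ⟨R, hR⟩ := exists_isParallelTransversal (M := M ／ C) hfin.sdiff
  refine ⟨M ／ C ↾ R, hR.isSimple_restrict, hfin.sdiff.subset hR.subset_ground, ?_,
    fun B hB => hC.2.contract_isBase_iff.1 (hR.spanning.isBase_restrict_iff.1 hB).1,
    fun S hS => hS.of_restrict_contract hM hC hR⟩
  have hpar := hR.two_mul_ncard_le hfin.sdiff fun e he =>
    hC.exists_ne_mem_closure_contract hCfin hmax he
  have hsplit := ncard_sdiff_add_ncard_of_subset hC.2.subset_ground hfin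
  rw [contract_ground] at hpar
  rw [restrict_ground_eq]
  omega

theorem clawBound_le_ncard_ground {t : ℕ} (hM : M.IsSimple) (hfin : M.E.Finite) (ht : 1 ≤ t)
    (hclaw : ∀ S, M.IsClaw S → S.ncard ≤ t) (hB : M.IsBase B) :
    clawBound t B.ncard ≤ M.E.ncard := by
  induction hn : B.ncard using Nat.strong_induction_on generalizing M B t with | _ n ih =>
  subst hn
  obtain rfl | ⟨e, he⟩ := B.eq_empty_or_nonempty
  · simp [clawBound]
  obtain ⟨C, hC, hmax⟩ := exists_isClaw_forall_ncard_le hM hfin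
  have hk : 1 ≤ C.ncard := by simpa using hmax _ (hM.isClaw_singleton (hB.subset_ground he))
  obtain ⟨N, hN, hNfin, hcount, hbase, hclawN⟩ := hC.exists_simple_minor hM hfin hmax
  obtain ⟨B', hB'⟩ := N.exists_isBase
  obtain ⟨hB'C, hdisj⟩ := hbase B' hB'
  have hrank : B.ncard = C.ncard + B'.ncard := by
    rw [hB.ncard_eq_ncard_of_isBase hB'C, ncard_union_eq hdisj (hNfin.subset hB'.subset_ground)
      (hfin.subset hC.2.subset_ground), add_comm]
  have hNbound :=
    ih B'.ncard (by omega) hN hNfin hk (fun S hS => hmax S (hclawN S hS)) hB' rfl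
  calc clawBound t B.ncard ≤ clawBound C.ncard B.ncard := clawBound_anti_left hk (hclaw C hC) _
    _ = C.ncard + 2 * clawBound C.ncard B'.ncard := by rw [hrank, clawBound_self_add hk]
    _ ≤ M.E.ncard := by omega

end Matroid

theorem claw_free_lower_bound_general {α : Type*} (r t : ℕ) (ht : 1 ≤ t)
    (M : Matroid α) (hfin : M.E.Finite) (hsimple : M.IsSimple)
    (hrank : ∃ B, M.IsBase B ∧ B.ncard = r)
    (hclaw : ¬ ∃ S, M.IsClaw S ∧ S.ncard = t + 1) :
    (t - r % t) * 2 ^ (r / t) + (r % t) * 2 ^ ((r + t - 1) / t) - t ≤ M.E.ncard := by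
  obtain ⟨B, hB, rfl⟩ := hrank
  rw [← clawBound_eq ht]
  exact Matroid.clawBound_le_ncard_ground hsimple hfin ht (fun S hS => hS.ncard_le hclaw) hB

/-- If `M` is a finite simple matroid of rank `r ≥ 1` with no `(t+1)`-claw (`t ≥ 1`),
then `|M.E| ≥ (t − a)·2^⌊r/t⌋ + a·2^⌈r/t⌉ − t` where `a = r % t`. -/
theorem claw_free_lower_bound {α : Type*} (r t : ℕ) (hr : 1 ≤ r) (ht : 1 ≤ t)
    (M : Matroid α) (hfin : M.E.Finite) (hsimple : M.IsSimple)
    (hrank : ∃ B, M.IsBase B ∧ B.ncard = r)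
    (hclaw : ¬ ∃ S, M.IsClaw S ∧ S.ncard = t + 1) :
    (t - r % t) * 2 ^ (r / t) + (r % t) * 2 ^ ((r + t - 1) / t) - t ≤ M.E.ncard :=
  claw_free_lower_bound_general r t ht M hfin hsimple hrank hclaw
end

section
/- Let M be a simple matroid, let X be a subset of the ground set of M, and let F be a subset of the ground set of the contraction M/X. Suppose that F is independent in M/X and that every element of the closure of F in M/X that is not a loop of M/X is parallel in M/X to some element of F (equivalently, F is a claw of a simplification of M/X). Then F is both a flat of M and an independent set of M, i.e., F is a claw of M. -/
/-- Deletion of a set from a matroid: restriction to the complement. -/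
def Matroid.deleteSet {α : Type*} (M : Matroid α) (X : Set α) : Matroid α :=
  M.restrict (M.E \ X)

/-- Contraction of a set in a matroid, defined by duality: `M ／ X = (M✶ ＼ X)✶`. -/
def Matroid.contractSet {α : Type*} (M : Matroid α) (X : Set α) : Matroid α :=
  (M✶.deleteSet X)✶

/-- `e` is a loop of `M` if it lies in the closure of the empty set. -/
def Matroid.IsLoopElem {α : Type*} (M : Matroid α) (e : α) : Prop :=
  e ∈ M.closure ∅

/-- `e` and `f` are parallel in `M` if both are nonloops of `M` and
`f` lies in the closure of `{e}` (so they span a common rank-1 flat). -/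
def Matroid.ParallelElems {α : Type*} (M : Matroid α) (e f : α) : Prop :=
  e ∈ M.E ∧ f ∈ M.E ∧ ¬ M.IsLoopElem e ∧ ¬ M.IsLoopElem f ∧ f ∈ M.closure {e}

open Set

/-!
Write `cl` for the closure of `M`. Since `F` is independent in `M ／ X`, `F ∪ J` is independent
for a basis `J` of `X`, so for `S ⊆ F` the flats `cl F` and `cl (S ∪ X) = cl (S ∪ J)` meet in
`cl S`. Take `e ∈ cl F`. With `S = ∅` and `M` loopless, `e ∉ cl X`; so `e` is a nonloop of
`M ／ X` spanned by `F`, hence parallel there to some `f ∈ F`, i.e. `e ∈ cl ({f} ∪ X)`.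
With `S = {f}` this gives `e ∈ cl {f}`, and simplicity forces `e = f ∈ F`. So `F` is a flat.
-/

namespace Matroid

variable {α : Type*} {M : Matroid α} {e f : α}

lemma contractSet_eq_contract (M : Matroid α) (X : Set α) : M.contractSet X = M ／ X := rfl

lemma IsSimple.notMem_closure_empty (hM : M.IsSimple) : e ∉ M.closure ∅ := fun he ↦ by
  have hi := hM e (M.closure_subset_ground ∅ he) e (M.closure_subset_ground ∅ he)
  rw [pair_eq_singleton] at hi
  exact hi.notMem_closure_sdiff_of_mem (mem_singleton e) (by rwa [sdiff_self])

lemma IsSimple.eq_of_mem_closure_singleton (hM : M.IsSimple) (hf : f ∈ M.E)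
    (he : e ∈ M.closure {f}) : e = f := by
  by_contra hne
  have hi := hM e (M.closure_subset_ground {f} he) f hf
  exact hi.notMem_closure_sdiff_of_mem (mem_insert e {f})
    (by rwa [insert_sdiff_of_mem _ (mem_singleton e),
      sdiff_singleton_eq_self (by simpa using hne)])

lemma ParallelElems.symm (h : M.ParallelElems e f) : M.ParallelElems f e := by
  obtain ⟨he, hf, hel, hfl, hfe⟩ := h
  refine ⟨hf, he, hfl, hel, ?_⟩
  rw [← insert_empty_eq] at hfe ⊢
  exact (closure_exchange ⟨hfe, hfl⟩).1

lemma closure_inter_closure_union_eq_of_contract_indep {F S X : Set α} (hF : (M ／ X).Indep F)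
    (hSF : S ⊆ F) : M.closure F ∩ M.closure (S ∪ X) = M.closure S := by
  obtain ⟨J, hJ⟩ := M.exists_isBasis' X
  obtain ⟨hFJ, hXF⟩ := hJ.contract_indep_iff.1 hF
  have hindep : M.Indep (F ∪ (S ∪ J)) := by rwa [← union_assoc, union_eq_left.2 hSF]
  have hinter : F ∩ (S ∪ J) = S := by
    rw [inter_union_distrib_left, inter_eq_right.2 hSF,
      (hXF.symm.mono_right hJ.subset).inter_eq, union_empty]
  rw [← closure_union_closure_right_eq, ← hJ.closure_eq_closure, closure_union_closure_right_eq,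
    ← hindep.closure_inter_eq_inter_closure, hinter]

end Matroid

open Matroid

theorem claw_of_simplification_of_contraction_is_claw_general {α : Type*} (M : Matroid α)
    (hsimple : M.IsSimple) (X : Set α) (F : Set α)
    (hindep : (M.contractSet X).Indep F)
    (hcl : ∀ e ∈ (M.contractSet X).closure F, ¬ (M.contractSet X).IsLoopElem e →
      ∃ f ∈ F, (M.contractSet X).ParallelElems e f) :
    M.IsFlat F ∧ M.Indep F := by
  rw [contractSet_eq_contract] at hindep hcl
  have hFi : M.Indep F := hindep.of_contract
  refine ⟨isFlat_iff_closure_eq.2 ((M.subset_closure F hFi.subset_ground).antisymm' ?_), hFi⟩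
  intro e he
  have heE : e ∈ M.E := M.closure_subset_ground F he
  have hecl : e ∉ M.closure X := fun hecl ↦ hsimple.notMem_closure_empty <| by
    rw [← closure_inter_closure_union_eq_of_contract_indep hindep (empty_subset F), empty_union]
    exact ⟨he, hecl⟩
  have heX : e ∉ X := fun h ↦ hecl (M.mem_closure_of_mem' h heE)
  obtain ⟨f, hfF, hpar⟩ := hcl e
    (by rw [contract_closure_eq]; exact ⟨M.closure_subset_closure subset_union_left he, heX⟩)
    (by simp [IsLoopElem, hecl])
  obtain ⟨-, -, -, -, hef⟩ := hpar.symm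
  rw [contract_closure_eq] at hef
  have hef' : e ∈ M.closure {f} := by
    rw [← closure_inter_closure_union_eq_of_contract_indep hindep (singleton_subset_iff.2 hfF)]
    exact ⟨he, hef.1⟩
  rwa [hsimple.eq_of_mem_closure_singleton (hFi.subset_ground hfF) hef']

/-- If `M` is simple, `X ⊆ M.E`, and `F` is independent in `M ／ X` with every non-loop
element of the closure of `F` in `M ／ X` parallel in `M ／ X` to an element of `F`
(i.e. `F` is a claw of a simplification of `M ／ X`), then `F` is a claw of `M`:
both a flat and an independent set of `M`. -/
theorem claw_of_simplification_of_contraction_is_claw {α : Type*} (M : Matroid α)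
    (hsimple : M.IsSimple) (X : Set α) (hX : X ⊆ M.E) (F : Set α)
    (hF : F ⊆ (M.contractSet X).E)
    (hindep : (M.contractSet X).Indep F)
    (hcl : ∀ e ∈ (M.contractSet X).closure F, ¬ (M.contractSet X).IsLoopElem e →
      ∃ f ∈ F, (M.contractSet X).ParallelElems e f) :
    M.IsFlat F ∧ M.Indep F :=
  claw_of_simplification_of_contraction_is_claw_general M hsimple X F hindep hcl
end

section
/- If M is a finite simple matroid of rank r with no 2-claw, then the ground set of M has at least 2^r − 1 elements. -/
open Set

namespace Matroid

variable {α : Type*} {M : Matroid α} {H I X : Set α} {e f x : α}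

lemma IsSimple.notMem_closure_singleton (hM : M.IsSimple) (he : e ∈ M.E) (hf : f ∈ M.E)
    (hne : e ≠ f) : f ∉ M.closure {e} := by
  simpa [hne] using (hM e he f hf).notMem_closure_sdiff_of_mem (e := f) (by simp)

lemma IsFlat.notMem_of_mem_closure_insert (hH : M.IsFlat H) (hXH : X ⊆ H) (he : e ∉ H)
    (hx : x ∈ M.closure (insert e X)) (hxX : x ∉ M.closure X) : x ∉ H := fun hxH ↦
  he <| hH.closure ▸
    M.closure_subset_closure (insert_subset hxH hXH) (M.mem_closure_insert hxX hx)

lemma IsFlat.eq_of_mem_closure_pair (hM : M.IsSimple) (hH : M.IsFlat H) (he : e ∉ H)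
    (hf : f ∈ H) (hx : x ∈ H) (hxf : x ∈ M.closure {e, f}) : x = f := by
  by_contra hne
  exact hH.notMem_of_mem_closure_insert (singleton_subset_iff.2 hf) he hxf
    (hM.notMem_closure_singleton (hH.subset_ground hf) (hH.subset_ground hx) (Ne.symm hne)) hx

lemma IsSimple.exists_mem_closure_pair_ne (hM : M.IsSimple)
    (hclaw : ¬ ∃ S, M.IsClaw S ∧ S.ncard = 2) (he : e ∈ M.E) (hf : f ∈ M.E) (hne : e ≠ f) :
    ∃ x ∈ M.closure {e, f}, x ≠ e ∧ x ≠ f := by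
  by_contra! h
  have hclosed : M.closure {e, f} ⊆ {e, f} := fun x hx ↦
    or_iff_not_imp_left.2 (h x hx)
  have hflat : M.IsFlat {e, f} :=
    isFlat_iff_closure_eq.2 (hclosed.antisymm (M.subset_closure _ (pair_subset he hf)))
  exact hclaw ⟨{e, f}, ⟨hflat, hM e he f hf⟩, ncard_pair hne⟩

lemma IsFlat.two_mul_ncard_add_one_le_ncard_closure_insert [M.Finite] (hM : M.IsSimple)
    (hclaw : ¬ ∃ S, M.IsClaw S ∧ S.ncard = 2) (hH : M.IsFlat H) (heE : e ∈ M.E)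
    (heH : e ∉ H) :
    2 * H.ncard + 1 ≤ (M.closure (insert e H)).ncard := by
  have hHE := hH.subset_ground
  choose! g hg_mem hg_ne_e hg_ne using fun f (hf : f ∈ H) ↦
    hM.exists_mem_closure_pair_ne hclaw heE (hHE hf) (ne_of_mem_of_not_mem hf heH).symm
  have hgE : ∀ f ∈ H, g f ∈ M.E := fun f hf ↦ M.closure_subset_ground _ (hg_mem f hf)
  have hg_notMem : ∀ f ∈ H, g f ∉ H := fun f hf ↦
    hH.notMem_of_mem_closure_insert (singleton_subset_iff.2 hf) heH (hg_mem f hf)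
      (hM.notMem_closure_singleton (hHE hf) (hgE f hf) (hg_ne f hf).symm)
  have hg_inj : InjOn g H := by
    intro f hf f' hf' hgg
    have he_mem : e ∈ M.closure {e, f} := M.subset_closure _ (pair_subset heE (hHE hf)) (by simp)
    have hf'_mem : f' ∈ M.closure {e, f} := by
      refine M.closure_subset_closure_of_subset_closure
        (insert_subset (hgg ▸ hg_mem f hf) (singleton_subset_iff.2 he_mem)) ?_
      refine M.mem_closure_insert
        (hM.notMem_closure_singleton heE (hgE f' hf') (hg_ne_e f' hf').symm) ?_
      simpa [pair_comm] using hg_mem f' hf'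
    exact (hH.eq_of_mem_closure_pair hM heH hf hf' hf'_mem).symm
  have hHfin : H.Finite := M.set_finite H
  have hdisj : Disjoint (g '' H) (insert e H) := by
    rw [disjoint_left]
    rintro _ ⟨f, hf, rfl⟩ (h | h)
    exacts [hg_ne_e f hf h, hg_notMem f hf h]
  have hsub : g '' H ∪ insert e H ⊆ M.closure (insert e H) := by
    refine union_subset ?_ (M.subset_closure _ (insert_subset heE hHE))
    rintro _ ⟨f, hf, rfl⟩
    exact M.closure_subset_closure (insert_subset_insert (singleton_subset_iff.2 hf))
      (hg_mem f hf)
  calc 2 * H.ncard + 1 = (g '' H ∪ insert e H).ncard := by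
        rw [ncard_union_eq hdisj (hHfin.image g) (hHfin.insert e), hg_inj.ncard_image,
          ncard_insert_of_notMem heH hHfin]
        ring
    _ ≤ (M.closure (insert e H)).ncard :=
        ncard_le_ncard hsub (M.set_finite _ (M.closure_subset_ground _))

lemma IsSimple.two_pow_ncard_sub_one_le_ncard_closure [M.Finite] (hM : M.IsSimple)
    (hclaw : ¬ ∃ S, M.IsClaw S ∧ S.ncard = 2) (hI : M.Indep I) :
    2 ^ I.ncard - 1 ≤ (M.closure I).ncard := by
  induction I, M.set_finite I hI.subset_ground using Set.Finite.induction_on with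
  | empty => simp
  | @insert e J heJ hJfin ih =>
    have hJ : M.Indep J := hI.subset (subset_insert e J)
    have he : e ∈ M.E \ M.closure J := (hJ.insert_indep_iff_of_notMem heJ).1 hI
    have hstep := (M.isFlat_closure J).two_mul_ncard_add_one_le_ncard_closure_insert hM hclaw
      he.1 he.2
    rw [closure_insert_closure_eq_closure_insert] at hstep
    rw [ncard_insert_of_notMem heJ hJfin, pow_succ]
    have := ih hJ
    omega

end Matroid

/-- A finite simple matroid of rank `r` with no `2`-claw has at least `2^r − 1` elements. -/
theorem two_claw_free_lower_bound {α : Type*} (r : ℕ) (M : Matroid α)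
    (hfin : M.E.Finite) (hsimple : M.IsSimple)
    (hrank : ∃ B, M.IsBase B ∧ B.ncard = r)
    (hclaw : ¬ ∃ S, M.IsClaw S ∧ S.ncard = 2) :
    2 ^ r - 1 ≤ M.E.ncard := by
  have : M.Finite := ⟨hfin⟩
  obtain ⟨B, hB, rfl⟩ := hrank
  simpa [hB.closure_eq] using hsimple.two_pow_ncard_sub_one_le_ncard_closure hclaw hB.indep
end

section
/- Let n ≥ 1 and t ≥ 1 be integers and let G be a simple graph on n vertices such that no forest on 2t+1 vertices is an induced subgraph of G, i.e., for every set S of 2t+1 vertices the induced subgraph G[S] is not acyclic. Then the number of edges of G is at least g(n,t), where g is defined by g(n,t) = 0 for n < 2t, g(n,t) = 3(n − 2t) for 2t ≤ n ≤ 4t, and g(n,t) = g(n−1,t) + ⌈n/t⌉ − 1 for n > 4t. -/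
/-- The extremal function `g(n,t)`: `g(n,t) = 0` for `n < 2t`, `g(n,t) = 3(n − 2t)` for
`2t ≤ n ≤ 4t`, and `g(n,t) = g(n−1,t) + ⌈n/t⌉ − 1` for `n > 4t`. -/
def g (t : ℕ) : ℕ → ℕ
  | 0 => 0
  | n + 1 =>
    if n + 1 < 2 * t then 0
    else if n + 1 ≤ 4 * t then 3 * (n + 1 - 2 * t)
    else g t n + (n + 1 + t - 1) / t - 1

/-!
Induction on the number of vertices. If some vertex has degree at least the increment
`g(n,t) - g(n-1,t)`, delete it. Otherwise take a maximal induced forest `S`: it has at most `2t`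
vertices, and every vertex outside `S` closes a cycle with it, so it has two neighbours among the
non-isolated vertices `T` of `G[S]`. Double counting the edges between `T` and the other vertices
gives `e(G) ≥ 3(n - 2t)` when all degrees are at most `2`, while for `n > 4t` the degree bound
`⌈n/t⌉ - 2` on `T` contradicts `|T| ≤ 2t`.
-/

open Finset

theorem g_of_le_four_mul {t n : ℕ} (h : n ≤ 4 * t) : g t n = 3 * (n - 2 * t) := by
  cases n with
  | zero => simp [g]
  | succ n => simp only [g]; split_ifs <;> omega

def gStep (t n : ℕ) : ℕ := if n ≤ 4 * t then 3 else (n + t - 1) / t - 1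

theorem g_succ_eq_add_gStep {t n : ℕ} (ht : 1 ≤ t) (h : 2 * t ≤ n) :
    g t (n + 1) = g t n + gStep t (n + 1) := by
  rw [g, gStep, if_neg (by omega)]
  by_cases h₄ : n + 1 ≤ 4 * t
  · rw [if_pos h₄, if_pos h₄, g_of_le_four_mul (by omega)]
    omega
  · rw [if_neg h₄, if_neg h₄]
    exact Nat.add_sub_assoc ((Nat.one_le_div_iff (by omega)).2 (by omega)) _

theorem gStep_sub_two_mul_lt {t n : ℕ} (ht : 1 ≤ t) (h : 4 * t < n) :
    (gStep t n - 2) * (2 * t) < 2 * (n - 2 * t) := by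
  have hceil : (n + t - 1) / t * t ≤ n + t - 1 := Nat.div_mul_le_self _ _
  have h3 : 3 ≤ (n + t - 1) / t := (Nat.le_div_iff_mul_le ht).2 (by omega)
  rw [gStep, if_neg (by omega), Nat.sub_sub, Nat.sub_mul]
  have : (n + t - 1) / t * (2 * t) = 2 * ((n + t - 1) / t * t) := by ring
  omega

namespace SimpleGraph

variable {V : Type*} {G : SimpleGraph V}

theorem not_isAcyclic_induce_iff {s : Set V} :
    ¬(G.induce s).IsAcyclic ↔
      ∃ u, ∃ c : G.Walk u u, c.IsCycle ∧ ∀ x ∈ c.support, x ∈ s := by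
  simp only [IsAcyclic, not_forall, not_not]
  constructor
  · rintro ⟨u, c, hc⟩
    refine ⟨_, c.map (Embedding.induce (G := G) s).toHom,
      hc.map (Embedding.induce (G := G) s).injective, fun x hx ↦ ?_⟩
    rw [Walk.support_map, List.mem_map] at hx
    obtain ⟨y, -, rfl⟩ := hx
    exact y.2
  · rintro ⟨u, c, hc, hcs⟩
    refine ⟨_, c.induce s hcs, ?_⟩
    rwa [← Walk.isCycle_map_iff_of_injective (f := (Embedding.induce (G := G) s).toHom)
      (Embedding.induce (G := G) s).injective, Walk.map_induce]

theorem exists_adj_adj_of_isAcyclic_of_not_isAcyclic_insert {s : Set V} {v : V}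
    (hs : (G.induce s).IsAcyclic) (hv : ¬(G.induce (insert v s)).IsAcyclic) :
    ∃ x ∈ s, ∃ y ∈ s, x ≠ y ∧ G.Adj v x ∧ G.Adj v y ∧
      (∃ z ∈ s, G.Adj x z) ∧ ∃ w ∈ s, G.Adj y w := by
  classical
  obtain ⟨u, c, hc, hcs⟩ := not_isAcyclic_induce_iff.1 hv
  have hvc : v ∈ c.support := by
    by_contra hvc
    refine not_isAcyclic_induce_iff.2 ⟨u, c, hc, fun x hx ↦ ?_⟩ hs
    exact (hcs x hx).resolve_left (ne_of_mem_of_not_mem hx hvc)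
  set d := c.rotate v hvc
  have hd : d.IsCycle := hc.rotate hvc
  have hlen := hd.three_le_length
  have hmem {i : ℕ} (h₀ : 0 < i) (hi : i < d.length) : d.getVert i ∈ s := by
    refine (hcs _ ((c.mem_support_rotate_iff v hvc).1 (d.getVert_mem_support i))).resolve_left ?_
    rw [hd.getVert_endpoint_iff hi.le]
    omega
  have hadj {i : ℕ} (hi : i < d.length) : G.Adj (d.getVert i) (d.getVert (i + 1)) :=
    d.adj_getVert_succ hi
  -- the two neighbours of `v` on the cycle, and their neighbours on it other than `v`
  refine ⟨d.getVert 1, hmem (by omega) (by omega), d.getVert (d.length - 1),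
    hmem (by omega) (by omega), ?_, ?_, ?_,
    ⟨d.getVert 2, hmem (by omega) (by omega), hadj (by omega)⟩,
    d.getVert (d.length - 2), hmem (by omega) (by omega), ?_⟩
  · exact fun h ↦ by have := hd.getVert_injOn (by simp; omega) (by simp; omega) h; omega
  · simpa using hadj (i := 0) (by omega)
  · have := hadj (i := d.length - 1) (by omega)
    rw [Nat.sub_add_cancel (by omega), d.getVert_length] at this
    exact this.symm
  · have := hadj (i := d.length - 2) (by omega)
    rw [show d.length - 2 + 1 = d.length - 1 by omega] at this
    exact this.symm

section Counting

variable [Fintype V] [DecidableRel G.Adj] {T D : Finset V}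

theorem card_add_sum_card_adj_le_sum_degree (hT : ∀ x ∈ T, ∃ z ∉ D, G.Adj x z) :
    #T + ∑ u ∈ D, #{x ∈ T | G.Adj u x} ≤ ∑ x ∈ T, G.degree x := by
  classical
  have hdeg (x : V) (hx : x ∈ T) : 1 + #{u ∈ D | G.Adj u x} ≤ G.degree x := by
    obtain ⟨z, hzD, hxz⟩ := hT x hx
    rw [← card_neighborFinset_eq_degree, add_comm, Nat.add_one_le_iff]
    refine card_lt_card ((ssubset_iff_of_subset fun u hu ↦ ?_).2 ⟨z, by simpa using hxz, ?_⟩)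
    · simpa [adj_comm] using (mem_filter.1 hu).2
    · simp [hzD]
  calc #T + ∑ u ∈ D, #{x ∈ T | G.Adj u x}
      = ∑ x ∈ T, (1 + #{u ∈ D | G.Adj u x}) := by
        rw [sum_add_distrib, card_eq_sum_ones]
        exact congrArg _ (sum_card_bipartiteAbove_eq_sum_card_bipartiteBelow (r := G.Adj))
    _ ≤ ∑ x ∈ T, G.degree x := sum_le_sum hdeg

theorem sum_card_adj_add_sum_degree_le (hDT : Disjoint D T) :
    ∑ u ∈ D, #{x ∈ T | G.Adj u x} + ∑ x ∈ T, G.degree x ≤ 2 * #G.edgeFinset := by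
  classical
  have hle (u : V) : #{x ∈ T | G.Adj u x} ≤ G.degree u := by
    rw [← card_neighborFinset_eq_degree]
    exact card_le_card fun x hx ↦ by simpa using (mem_filter.1 hx).2
  calc ∑ u ∈ D, #{x ∈ T | G.Adj u x} + ∑ x ∈ T, G.degree x
      ≤ ∑ u ∈ D, G.degree u + ∑ x ∈ T, G.degree x := by gcongr with u; exact hle u
    _ = ∑ v ∈ D ∪ T, G.degree v := (sum_union hDT).symm
    _ ≤ ∑ v, G.degree v := sum_le_sum_of_subset (subset_univ _)
    _ = 2 * #G.edgeFinset := sum_degrees_eq_twice_card_edges G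

omit [Fintype V] in
theorem two_mul_card_le_sum_card_adj (hD : ∀ u ∈ D, 2 ≤ #{x ∈ T | G.Adj u x}) :
    2 * #D ≤ ∑ u ∈ D, #{x ∈ T | G.Adj u x} := by
  simpa [mul_comm] using card_nsmul_le_sum D _ 2 hD

variable (hD : ∀ u ∈ D, 2 ≤ #{x ∈ T | G.Adj u x}) (hT : ∀ x ∈ T, ∃ z ∉ D, G.Adj x z)
include hD hT

theorem three_mul_card_le_card_edgeFinset (hDT : Disjoint D T)
    (hdeg : ∀ x ∈ T, G.degree x ≤ 2) : 3 * #D ≤ #G.edgeFinset := by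
  have h₁ := card_add_sum_card_adj_le_sum_degree hT
  have h₂ := sum_card_adj_add_sum_degree_le (G := G) hDT
  have h₃ : ∑ x ∈ T, G.degree x ≤ 2 * #T := by
    simpa [mul_comm] using sum_le_card_nsmul T _ 2 hdeg
  have h₄ := two_mul_card_le_sum_card_adj hD
  omega

theorem two_mul_card_le_mul_card {Δ : ℕ} (hdeg : ∀ x ∈ T, G.degree x ≤ Δ) :
    2 * #D ≤ (Δ - 1) * #T := by
  have h₁ := card_add_sum_card_adj_le_sum_degree hT
  have h₂ : ∑ x ∈ T, G.degree x ≤ Δ * #T := by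
    simpa [mul_comm] using sum_le_card_nsmul T _ Δ hdeg
  have h₃ := two_mul_card_le_sum_card_adj hD
  rw [Nat.sub_one_mul]
  omega

end Counting

section Forests

variable {t : ℕ} {A : Finset V}

theorem card_le_of_isAcyclic_induce
    (hA : ∀ S ⊆ A, #S = 2 * t + 1 → ¬(G.induce (S : Set V)).IsAcyclic) {S : Finset V}
    (hSA : S ⊆ A) (hS : (G.induce (S : Set V)).IsAcyclic) : #S ≤ 2 * t := by
  by_contra! h
  obtain ⟨S', hS'S, hS'⟩ := exists_subset_card_eq (show 2 * t + 1 ≤ #S by omega)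
  exact hA S' (hS'S.trans hSA) hS' (hS.embedding (G.induceHomOfLE (coe_subset.2 hS'S)))

variable [DecidableEq V]

theorem exists_maximal_isAcyclic_induce (A : Finset V) :
    ∃ S ⊆ A, (G.induce (S : Set V)).IsAcyclic ∧
      ∀ v ∈ A \ S, ¬(G.induce (insert v (S : Set V))).IsAcyclic := by
  classical
  obtain ⟨S, hS, hmax⟩ := exists_max_image
    (A.powerset.filter fun S : Finset V ↦ (G.induce (S : Set V)).IsAcyclic) card
    ⟨∅, mem_filter.2 ⟨empty_mem_powerset A, fun v ↦ absurd v.2 (by simp)⟩⟩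
  rw [mem_filter, mem_powerset] at hS
  refine ⟨S, hS.1, hS.2, fun v hv hacyc ↦ ?_⟩
  rw [mem_sdiff] at hv
  have := hmax (insert v S) (mem_filter.2 ⟨mem_powerset.2 (insert_subset hv.1 hS.1),
    by rwa [coe_insert]⟩)
  rw [card_insert_of_notMem hv.2] at this
  omega

variable [DecidableRel G.Adj]

theorem two_le_card_filter_adj_of_not_isAcyclic_insert {S : Finset V} {v : V}
    (hS : (G.induce (S : Set V)).IsAcyclic) (hv : ¬(G.induce (insert v (S : Set V))).IsAcyclic) :
    2 ≤ #{x ∈ {x ∈ S | ∃ z ∈ S, G.Adj x z} | G.Adj v x} := by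
  obtain ⟨x, hx, y, hy, hxy, hvx, hvy, ⟨z, hz, hxz⟩, w, hw, hyw⟩ :=
    exists_adj_adj_of_isAcyclic_of_not_isAcyclic_insert hS hv
  rw [← card_pair hxy]
  refine card_le_card (insert_subset ?_ (singleton_subset_iff.2 ?_))
  · simpa [hvx] using ⟨hx, z, hz, hxz⟩
  · simpa [hvy] using ⟨hy, w, hw, hyw⟩

variable [Fintype V]

theorem g_le_card_edgeFinset_of_degree_lt (ht : 1 ≤ t)
    (hA : ∀ S ⊆ A, #S = 2 * t + 1 → ¬(G.induce (S : Set V)).IsAcyclic) (hn : 2 * t < #A)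
    (hdeg : ∀ v ∈ A, G.degree v < gStep t #A) : g t #A ≤ #G.edgeFinset := by
  obtain ⟨S, hSA, hS, hmax⟩ := exists_maximal_isAcyclic_induce (G := G) A
  set T := {x ∈ S | ∃ z ∈ S, G.Adj x z}
  have hTS : T ⊆ S := filter_subset _ _
  have hDT : Disjoint (A \ S) T := disjoint_of_subset_right hTS sdiff_disjoint
  have hD (u : V) (hu : u ∈ A \ S) : 2 ≤ #{x ∈ T | G.Adj u x} :=
    two_le_card_filter_adj_of_not_isAcyclic_insert hS (hmax u hu)
  have hT (x : V) (hx : x ∈ T) : ∃ z ∉ A \ S, G.Adj x z := by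
    obtain ⟨z, hz, hxz⟩ := (mem_filter.1 hx).2
    exact ⟨z, fun h ↦ (mem_sdiff.1 h).2 hz, hxz⟩
  have hSt := card_le_of_isAcyclic_induce hA hSA hS
  have hAS : #(A \ S) = #A - #S := card_sdiff_of_subset hSA
  have hdegT (x : V) (hx : x ∈ T) : G.degree x ≤ gStep t #A - 1 := by
    have := hdeg x (hSA (hTS hx)); omega
  by_cases hmid : #A ≤ 4 * t
  · rw [gStep, if_pos hmid] at hdegT
    have := three_mul_card_le_card_edgeFinset hD hT hDT hdegT
    rw [g_of_le_four_mul hmid]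
    omega
  · have h₁ := two_mul_card_le_mul_card hD hT hdegT
    have h₂ := gStep_sub_two_mul_lt ht (not_le.1 hmid)
    have h₃ : (gStep t #A - 1 - 1) * #T ≤ (gStep t #A - 2) * (2 * t) :=
      Nat.mul_le_mul (by omega) ((card_le_card hTS).trans hSt)
    omega

theorem g_le_card_edgeFinset (ht : 1 ≤ t)
    (hA : ∀ S ⊆ A, #S = 2 * t + 1 → ¬(G.induce (S : Set V)).IsAcyclic) :
    g t #A ≤ #G.edgeFinset := by
  induction A using Finset.strongInduction generalizing G with
  | H A ih =>
  by_cases hsmall : #A ≤ 2 * t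
  · rw [g_of_le_four_mul (by omega), Nat.sub_eq_zero_of_le hsmall]
    exact Nat.zero_le _
  by_cases hsparse : ∀ v ∈ A, G.degree v < gStep t #A
  · exact g_le_card_edgeFinset_of_degree_lt ht hA (by omega) hsparse
  obtain ⟨v, hvA, hv⟩ : ∃ v ∈ A, gStep t #A ≤ G.degree v := by simpa using hsparse
  have hrest : g t #(A.erase v) ≤ #(G.deleteIncidenceSet v).edgeFinset := by
    refine ih _ (erase_ssubset hvA) fun S hS hcard ↦ ?_
    rw [induce_deleteIncidenceSet_of_notMem _ fun h ↦ (notMem_erase v A) (hS h)]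
    exact hA S (hS.trans (erase_subset v A)) hcard
  rw [card_edgeFinset_deleteIncidenceSet] at hrest
  have hcard := card_erase_add_one hvA
  have hstep := g_succ_eq_add_gStep (n := #(A.erase v)) ht (by omega)
  rw [hcard] at hstep
  have := G.degree_le_card_edgeFinset (v := v)
  omega

end Forests

end SimpleGraph

theorem graph_claw_free_lower_bound_general {V : Type*} [Fintype V] (n t : ℕ)
    (ht : 1 ≤ t) (hcard : Fintype.card V = n) (G : SimpleGraph V)
    (hforest : ∀ S : Set V, S.ncard = 2 * t + 1 → ¬ (G.induce S).IsAcyclic) :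
    g t n ≤ G.edgeSet.ncard := by
  classical
  have h := G.g_le_card_edgeFinset (A := Finset.univ) ht fun S _ hS ↦
    hforest S (by rwa [Set.ncard_coe_finset])
  rwa [card_univ, hcard, ← Set.ncard_coe_finset, SimpleGraph.coe_edgeFinset] at h

/-- If `G` is a simple graph on `n ≥ 1` vertices with no induced forest on `2t+1`
vertices (`t ≥ 1`), then `G` has at least `g(n,t)` edges. -/
theorem graph_claw_free_lower_bound {V : Type*} [Fintype V] (n t : ℕ) (hn : 1 ≤ n)
    (ht : 1 ≤ t) (hcard : Fintype.card V = n) (G : SimpleGraph V)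
    (hforest : ∀ S : Set V, S.ncard = 2 * t + 1 → ¬ (G.induce S).IsAcyclic) :
    g t n ≤ G.edgeSet.ncard :=
  graph_claw_free_lower_bound_general n t ht hcard G hforest
end

section
/- Let t ≥ 1 and n > 2t be integers, and let G be a simple graph on n vertices such that for every set S of 2t+1 vertices the induced subgraph G[S] is not acyclic. Then G has a vertex of degree at least ⌈n/t⌉ − 1. -/
/-!
Let `Δ` be the maximum degree and take a maximal set `F` of vertices inducing a forest; then
`|F| ≤ 2t`. Adding a vertex `w ∉ F` creates a cycle, necessarily through `w`, so `w` has two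
distinct neighbours in `F`, each of which also has a neighbour inside `F` (its other neighbour on
the cycle). Such a vertex of `F` has at most `Δ - 1` neighbours outside `F`, so counting the edges
between `Fᶜ` and these vertices gives `2 (n - |F|) ≤ |F| (Δ - 1) ≤ 2t (Δ - 1)`, i.e.
`n ≤ t (Δ + 1)`.
-/

open SimpleGraph Finset

namespace SimpleGraph

variable {V : Type*} {G : SimpleGraph V}

def nonisolatedIn (G : SimpleGraph V) [DecidableRel G.Adj] (F : Finset V) : Finset V :=
  {v ∈ F | ∃ u ∈ F, G.Adj v u}

lemma Walk.IsCycle.snd_mem_and_exists_adj {S : Set V} {w : V} {c : G.Walk w w}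
    (hc : c.IsCycle) (hS : ∀ x ∈ c.support, x ∈ insert w S) :
    c.snd ∈ S ∧ ∃ z ∈ S, G.Adj c.snd z := by
  have hlen := hc.three_le_length
  have getVert_mem {i : ℕ} (hi : 0 < i) (hi' : i < c.length) : c.getVert i ∈ S := by
    refine (hS _ (c.getVert_mem_support i)).resolve_left ?_
    rw [hc.getVert_endpoint_iff hi'.le]
    omega
  exact ⟨getVert_mem (by omega) (by omega),
    c.getVert 2, getVert_mem (by omega) (by omega), c.adj_getVert_succ (by omega)⟩

lemma exists_isCycle_through_of_not_isAcyclic_induce_insert [DecidableEq V] {S : Set V}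
    (hS : (G.induce S).IsAcyclic) {w : V} (hw : ¬ (G.induce (insert w S)).IsAcyclic) :
    ∃ c : G.Walk w w, c.IsCycle ∧ ∀ x ∈ c.support, x ∈ insert w S := by
  obtain ⟨u, c, hc⟩ : ∃ (u : _) (c : (G.induce (insert w S)).Walk u u), c.IsCycle := by
    simpa [IsAcyclic] using hw
  set p := c.map (Embedding.induce (insert w S)).toHom
  have hp : p.IsCycle := hc.map (Embedding.induce (G := G) _).injective
  have hpS : ∀ x ∈ p.support, x ∈ insert w S := by
    simp only [p, Walk.support_map, List.mem_map]
    rintro _ ⟨y, -, rfl⟩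
    exact y.2
  by_cases hwp : w ∈ p.support
  · exact ⟨p.rotate w hwp, hp.rotate hwp, fun x hx ↦
      hpS x ((Walk.mem_support_rotate_iff _ _ _).1 hx)⟩
  · have hpS' : ∀ x ∈ p.support, x ∈ S := fun x hx ↦
      (hpS x hx).resolve_left (by rintro rfl; exact hwp hx)
    exact (hS _ (p.map_induce hpS' ▸ hp).of_map).elim

lemma one_lt_card_adj_nonisolatedIn [DecidableEq V] [DecidableRel G.Adj] {F : Finset V}
    (hF : (G.induce (F : Set V)).IsAcyclic) {w : V}
    (hw : ¬ (G.induce (insert w (F : Set V))).IsAcyclic) :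
    1 < #{v ∈ G.nonisolatedIn F | G.Adj w v} := by
  obtain ⟨c, hc, hcF⟩ := exists_isCycle_through_of_not_isAcyclic_induce_insert hF hw
  obtain ⟨hx, hxF⟩ := hc.snd_mem_and_exists_adj hcF
  obtain ⟨hy, hyF⟩ := hc.reverse.snd_mem_and_exists_adj fun x hx ↦ hcF x (by simpa using hx)
  rw [Walk.snd_reverse] at hy hyF
  refine Finset.one_lt_card.2 ⟨c.snd, ?_, c.penultimate, ?_, hc.snd_ne_penultimate⟩
  · exact mem_filter.2 ⟨mem_filter.2 ⟨hx, hxF⟩, c.adj_snd hc.not_nil⟩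
  · exact mem_filter.2 ⟨mem_filter.2 ⟨hy, hyF⟩, (c.adj_penultimate hc.not_nil).symm⟩

variable [Fintype V] [DecidableEq V] [DecidableRel G.Adj]

lemma card_adj_compl_add_one_le_degree {F : Finset V} {v : V} (hv : v ∈ G.nonisolatedIn F) :
    #{w ∈ Fᶜ | G.Adj w v} + 1 ≤ G.degree v := by
  obtain ⟨hvF, u, huF, hvu⟩ := mem_filter.1 hv
  have hu : u ∉ ({w ∈ Fᶜ | G.Adj w v} : Finset V) := by simp [huF]
  rw [← card_insert_of_notMem hu, ← card_neighborFinset_eq_degree]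
  refine card_le_card (insert_subset (by simpa using hvu) fun w hw ↦ ?_)
  simpa [adj_comm] using (mem_filter.1 hw).2

lemma card_compl_mul_two_le {F : Finset V}
    (h : ∀ w ∉ F, 1 < #{v ∈ G.nonisolatedIn F | G.Adj w v}) :
    #Fᶜ * 2 ≤ #F * (G.maxDegree - 1) := by
  calc #Fᶜ * 2 ≤ #(G.nonisolatedIn F) * (G.maxDegree - 1) :=
        card_mul_le_card_mul G.Adj (fun w hw ↦ h w (mem_compl.1 hw)) fun v hv ↦ by
          have := card_adj_compl_add_one_le_degree hv
          have := G.degree_le_maxDegree v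
          unfold bipartiteBelow
          omega
    _ ≤ #F * (G.maxDegree - 1) := Nat.mul_le_mul_right _ (card_le_card (filter_subset _ _))

end SimpleGraph

/-- A simple graph on `n > 2t` vertices (`t ≥ 1`) with no induced forest on `2t+1`
vertices has a vertex of degree at least `⌈n/t⌉ − 1`. -/
theorem graph_claw_free_max_degree {V : Type*} [Fintype V] (n t : ℕ)
    (ht : 1 ≤ t) (hnt : 2 * t < n) (hcard : Fintype.card V = n) (G : SimpleGraph V)
    (hforest : ∀ S : Set V, S.ncard = 2 * t + 1 → ¬ (G.induce S).IsAcyclic) :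
    ∃ v : V, (n + t - 1) / t - 1 ≤ (G.neighborSet v).ncard := by
  classical
  obtain ⟨F, hF⟩ :
      ∃ F : Finset V, Maximal (fun F : Finset V ↦ (G.induce (F : Set V)).IsAcyclic) F :=
    (Set.toFinite {F : Finset V | (G.induce (F : Set V)).IsAcyclic}).exists_maximal
      ⟨∅, by rw [Set.mem_ofPred_eq, coe_empty]; exact IsAcyclic.of_subsingleton⟩
  have hF2t : #F ≤ 2 * t := by
    by_contra! hlt
    obtain ⟨S, hSF, hS⟩ := exists_subset_card_eq (s := F) (n := 2 * t + 1) hlt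
    exact hforest S (by simp [hS]) (hF.prop.embedding (G.induceHomOfLE (by simpa using hSF)))
  have hcount := card_compl_mul_two_le fun w hw ↦ one_lt_card_adj_nonisolatedIn hF.prop
    fun h ↦ hF.not_prop_of_gt (ssubset_insert hw) (by rwa [coe_insert])
  rw [card_compl, hcard] at hcount
  have : Nonempty V := Fintype.card_pos_iff.1 (by omega)
  obtain ⟨v, hv⟩ := G.exists_maximal_degree_vertex
  refine ⟨v, ?_⟩
  rw [← coe_neighborFinset, Set.ncard_coe_finset, card_neighborFinset_eq_degree, ← hv]
  have hn : n ≤ t * (G.maxDegree + 1) := by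
    obtain ⟨d, hd⟩ : ∃ d, G.maxDegree = d + 1 :=
      Nat.exists_eq_add_one_of_ne_zero fun h ↦ by rw [h] at hcount; omega
    simp only [hd, Nat.add_sub_cancel] at hcount ⊢
    have : n ≤ n - #F + #F := by omega
    nlinarith [Nat.mul_le_mul_right d hF2t]
  have : (n + t - 1) / t ≤ G.maxDegree + 1 := (ceilDiv_le_iff_le_mul (by omega)).2 hn
  omega
end
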